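/- arXiv:1806.09101 — 3 statements merged into one kernel-verified Lean document; each statement's English description precedes it below -/
import Mathlib

section
/- Theorem 3.4 (Markovianity without time-scale separation): Let the N×N rate matrix W have the block structure W x y = R x y when c x = c y and W x y = V (c x) (c y) when c x ≠ c y (transitions between different mesostates are independent of the microstate). Then: (i) W satisfies the lumpability condition; in particular, for every y with c y = α, ∑_{x : c x = α} R x y = −∑_{β ≠ α} n_β · V β α, where n_α = #{x : c x = α}; (ii) defining the lumped rate matrix 𝒱 by 𝒱 α β = n_α · V α β for α ≠ β and 𝒱 β β = −∑_{α ≠ β} n_α · V α β, one has Λ W = 𝒱 Λ, so every solution of d/dt p = W p has lumped marginal obeying d/dt (Λp) α = ∑_{β ≠ α} ( n_α V α β (Λp) β − n_β V β α (Λp) α ); (iii) if W π = 0 for a probability vector π, then 𝒱 (Λπ) = 0, and hence for strictly positive Λp and Λπ the mesolevel entropy production rate −∑_α (𝒱 (Λp))_α · (log (Λp)_α − log (Λπ)_α) is nonnegative. -/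
open Matrix Finset

/-- Coarse-graining operator: `(Λ p) α = ∑_{x : c x = α} p x`. -/
noncomputable def lump {N M : ℕ} (c : Fin N → Fin M) (p : Fin N → ℝ) : Fin M → ℝ :=
  fun α => ∑ x, if c x = α then p x else 0

/-- The coarse-graining operator `Λ` as an `M × N` matrix. -/
noncomputable def lumpMat {N M : ℕ} (c : Fin N → Fin M) : Matrix (Fin M) (Fin N) ℝ :=
  Matrix.of fun α x => if c x = α then (1 : ℝ) else 0

/-- `n_α = #{x : c x = α}`, the number of microstates in mesostate `α`. -/
noncomputable def blockSize {N M : ℕ} (c : Fin N → Fin M) (α : Fin M) : ℝ :=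
  ((univ.filter fun x => c x = α).card : ℝ)

/-- The lumped rate matrix `𝒱`: `𝒱 α β = n_α · V α β` for `α ≠ β` and
`𝒱 β β = −∑_{α ≠ β} n_α · V α β`. -/
noncomputable def lumpedRate {N M : ℕ} (c : Fin N → Fin M)
    (V : Matrix (Fin M) (Fin M) ℝ) : Matrix (Fin M) (Fin M) ℝ :=
  Matrix.of fun α β =>
    if α = β then -∑ γ ∈ univ.filter (fun γ => γ ≠ β), blockSize c γ * V γ β
    else blockSize c α * V α β

/-!
Since the rates between different blocks depend only on the blocks, the total rate from a
microstate `y` into a block `α ≠ c y` is `n_α V α (c y)`, whatever `y` is; the rate of staying in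
`c y` is then forced by the zero column sums of `W`. Hence the column of `Λ W` at `y` depends only
on `c y`, which is `Λ W = 𝒱 Λ`, and the lumped marginal obeys the master equation of the rate
matrix `𝒱`. Its stationary state is `Λ π`, and the entropy production of a rate matrix relative to
a positive stationary state is nonnegative by `log u ≤ u - 1`, applied to each off-diagonal rate.
-/

section EntropyProduction

variable {ι : Type*} [Fintype ι] (A : Matrix ι ι ℝ)

lemma neg_sum_mulVec_mul_eq (hcol : ∀ β, ∑ α, A α β = 0) (q f : ι → ℝ) :
    -∑ α, (A *ᵥ q) α * f α = ∑ α, ∑ β, A α β * (q β * (f β - f α)) := by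
  have hdiag : ∑ α, ∑ β, A α β * (q β * f β) = 0 := by
    rw [Finset.sum_comm]
    simp [← Finset.sum_mul, hcol]
  simp only [mul_sub, Finset.sum_sub_distrib, hdiag, mulVec, dotProduct, Finset.sum_mul, mul_assoc]
  ring

lemma sum_sum_mul_sub_mul_eq_zero (hcol : ∀ β, ∑ α, A α β = 0) {qs : ι → ℝ}
    (hfix : A *ᵥ qs = 0) (q r : ι → ℝ) :
    ∑ α, ∑ β, A α β * (q β - qs β * r α) = 0 := by
  have hq : ∑ α, ∑ β, A α β * q β = 0 := by
    rw [Finset.sum_comm]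
    simp [← Finset.sum_mul, hcol]
  have hqs : ∑ α, ∑ β, A α β * (qs β * r α) = 0 := by
    have : ∀ α, ∑ β, A α β * (qs β * r α) = (A *ᵥ qs) α * r α := fun α => by
      simp only [mulVec, dotProduct, Finset.sum_mul, mul_assoc]
    simp [this, hfix]
  simp only [mul_sub, Finset.sum_sub_distrib, hq, hqs, sub_zero]

lemma sub_mul_le_mul_log_div_sub_log {b s x : ℝ} (hb : 0 < b) (hs : 0 < s) (hx : 0 < x) :
    b - s * x ≤ b * (Real.log (b / s) - Real.log x) := by
  have hbs : 0 < b / s := div_pos hb hs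
  have hlog : Real.log x - Real.log (b / s) ≤ x / (b / s) - 1 := by
    rw [← Real.log_div hx.ne' hbs.ne']
    exact Real.log_le_sub_one_of_pos (div_pos hx hbs)
  have hmul : b * (x / (b / s)) = s * x := by field_simp
  nlinarith [mul_le_mul_of_nonneg_left hlog hb.le]

theorem entropyProduction_nonneg (hoff : ∀ α β, α ≠ β → 0 ≤ A α β)
    (hcol : ∀ β, ∑ α, A α β = 0) {q qs : ι → ℝ} (hq : ∀ α, 0 < q α) (hqs : ∀ α, 0 < qs α)
    (hfix : A *ᵥ qs = 0) :
    0 ≤ -∑ α, (A *ᵥ q) α * (Real.log (q α) - Real.log (qs α)) := by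
  set r : ι → ℝ := fun α => q α / qs α
  have hr : ∀ α, 0 < r α := fun α => div_pos (hq α) (hqs α)
  have hlog : ∀ α, Real.log (q α) - Real.log (qs α) = Real.log (r α) := fun α =>
    (Real.log_div (hq α).ne' (hqs α).ne').symm
  simp only [hlog]
  rw [neg_sum_mulVec_mul_eq A hcol, ← sum_sum_mul_sub_mul_eq_zero A hcol hfix q r]
  refine Finset.sum_le_sum fun α _ => Finset.sum_le_sum fun β _ => ?_
  by_cases hαβ : α = β
  · subst hαβ
    simp [r, mul_div_cancel₀ _ (hqs α).ne']
  · exact mul_le_mul_of_nonneg_left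
      (sub_mul_le_mul_log_div_sub_log (hq β) (hqs β) (hr α)) (hoff α β hαβ)

end EntropyProduction

section Lumping

variable {N M : ℕ} (c : Fin N → Fin M)

lemma lump_apply (p : Fin N → ℝ) (α : Fin M) :
    lump c p α = ∑ x ∈ univ.filter (fun x => c x = α), p x :=
  (Finset.sum_filter _ _).symm

lemma lump_eq_mulVec (p : Fin N → ℝ) : lump c p = lumpMat c *ᵥ p := by
  funext α
  simp [lump, lumpMat, mulVec, dotProduct, ite_mul]

lemma exists_of_lump_ne_zero {p : Fin N → ℝ} {α : Fin M} (h : lump c p α ≠ 0) :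
    ∃ x, c x = α := by
  obtain ⟨x, -, hx⟩ := Finset.exists_ne_zero_of_sum_ne_zero h
  exact ⟨x, by_contra fun hcx => hx (if_neg hcx)⟩

lemma hasDerivAt_lump {p : ℝ → Fin N → ℝ} {p' : Fin N → ℝ} {t : ℝ}
    (hp : ∀ x, HasDerivAt (fun s => p s x) (p' x) t) (α : Fin M) :
    HasDerivAt (fun s => lump c (p s) α) (lump c p' α) t := by
  simp only [lump_apply]
  exact HasDerivAt.fun_sum fun x _ => hp x

lemma sum_comp_eq_sum_blockSize_mul (g : Fin M → ℝ) :
    ∑ x, g (c x) = ∑ γ, blockSize c γ * g γ := by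
  rw [← Finset.sum_fiberwise' univ c g]
  simp [blockSize]

lemma lumpMat_mul_apply (W : Matrix (Fin N) (Fin N) ℝ) (α : Fin M) (y : Fin N) :
    (lumpMat c * W) α y = lump c (fun x => W x y) α := by
  simp [lump, lumpMat, mul_apply, ite_mul]

lemma mul_lumpMat_apply (L : Matrix (Fin M) (Fin M) ℝ) (α : Fin M) (y : Fin N) :
    (L * lumpMat c) α y = L α (c y) := by
  simp [lumpMat, mul_apply]

lemma lump_mulVec_of_lumpMat_mul {W : Matrix (Fin N) (Fin N) ℝ} {L : Matrix (Fin M) (Fin M) ℝ}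
    (h : lumpMat c * W = L * lumpMat c) (p : Fin N → ℝ) :
    lump c (W *ᵥ p) = L *ᵥ lump c p := by
  simp only [lump_eq_mulVec, mulVec_mulVec, h]

end Lumping

section LumpedRate

variable {N M : ℕ} (c : Fin N → Fin M) (V : Matrix (Fin M) (Fin M) ℝ)

lemma lumpedRate_apply_self (β : Fin M) :
    lumpedRate c V β β = -∑ γ ∈ univ.erase β, blockSize c γ * V γ β := by
  simp [lumpedRate, Finset.filter_ne']

lemma lumpedRate_apply_of_ne {α β : Fin M} (h : α ≠ β) :
    lumpedRate c V α β = blockSize c α * V α β := by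
  simp [lumpedRate, h]

lemma sum_lumpedRate_apply (β : Fin M) : ∑ α, lumpedRate c V α β = 0 := by
  rw [← Finset.add_sum_erase _ _ (mem_univ β), lumpedRate_apply_self,
    Finset.sum_congr rfl fun α hα => lumpedRate_apply_of_ne c V (ne_of_mem_erase hα)]
  ring

lemma lumpedRate_mulVec_apply (q : Fin M → ℝ) (α : Fin M) :
    (lumpedRate c V *ᵥ q) α
      = ∑ β ∈ univ.filter (fun β => β ≠ α),
          (blockSize c α * V α β * q β - blockSize c β * V β α * q α) := by
  have hoff : ∑ β ∈ univ.erase α, lumpedRate c V α β * q β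
      = ∑ β ∈ univ.erase α, blockSize c α * V α β * q β :=
    Finset.sum_congr rfl fun β hβ => by
      rw [lumpedRate_apply_of_ne c V (ne_of_mem_erase hβ).symm]
  rw [mulVec, dotProduct, ← Finset.add_sum_erase _ _ (mem_univ α), lumpedRate_apply_self, hoff,
    Finset.filter_ne', Finset.sum_sub_distrib, ← Finset.sum_mul]
  ring

variable {c V} {W : Matrix (Fin N) (Fin N) ℝ}

lemma lump_col_eq_lumpedRate (hWsum : ∀ y, ∑ x, W x y = 0)
    (hV : ∀ x y, c x ≠ c y → W x y = V (c x) (c y)) (α : Fin M) (y : Fin N) :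
    lump c (fun x => W x y) α = lumpedRate c V α (c y) := by
  rw [lump_apply]
  by_cases hα : α = c y
  · subst hα
    have hout : ∑ x ∈ univ.filter (fun x => ¬c x = c y), W x y
        = ∑ γ ∈ univ.filter (fun γ => γ ≠ c y), blockSize c γ * V γ (c y) := by
      rw [Finset.sum_congr rfl fun x hx => hV x y (mem_filter.mp hx).2, Finset.sum_filter,
        Finset.sum_filter, sum_comp_eq_sum_blockSize_mul c fun γ => if γ ≠ c y then V γ _ else 0]
      simp [mul_ite]
    have htotal := Finset.sum_filter_add_sum_filter_not univ (fun x => c x = c y) (W · y)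
    rw [hWsum, hout] at htotal
    simp only [lumpedRate, of_apply, if_true]
    linarith
  · have hin : ∀ x ∈ univ.filter (fun x => c x = α), W x y = V α (c y) := fun x hx => by
      obtain rfl := (mem_filter.mp hx).2
      exact hV x y hα
    rw [Finset.sum_congr rfl hin, Finset.sum_const, nsmul_eq_mul]
    simp [lumpedRate, hα, blockSize]

lemma lumpMat_mul_eq_lumpedRate_mul (hWsum : ∀ y, ∑ x, W x y = 0)
    (hV : ∀ x y, c x ≠ c y → W x y = V (c x) (c y)) :
    lumpMat c * W = lumpedRate c V * lumpMat c := by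
  ext α y
  rw [lumpMat_mul_apply, mul_lumpMat_apply, lump_col_eq_lumpedRate hWsum hV]

lemma lumpedRate_nonneg_of_ne (hWoff : ∀ x y, x ≠ y → 0 ≤ W x y)
    (hV : ∀ x y, c x ≠ c y → W x y = V (c x) (c y)) {α β : Fin M} (hαβ : α ≠ β)
    (hβ : ∃ y, c y = β) : 0 ≤ lumpedRate c V α β := by
  rw [lumpedRate_apply_of_ne c V hαβ]
  by_cases hα : ∃ x, c x = α
  · obtain ⟨x, rfl⟩ := hα
    obtain ⟨y, rfl⟩ := hβ
    rw [← hV x y hαβ]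
    exact mul_nonneg (Nat.cast_nonneg _) (hWoff x y fun h => hαβ (congrArg c h))
  · simp [blockSize, Finset.filter_false_of_mem fun x _ hx => hα ⟨x, hx⟩]

end LumpedRate
/-- **Theorem 3.4 (Markovianity without time-scale separation).**
If the rate matrix `W` has the block structure `W x y = R x y` for `c x = c y` and
`W x y = V (c x) (c y)` for `c x ≠ c y`, then: (i) `W` is lumpable, and in particular
`∑_{x : c x = α} R x y = −∑_{β ≠ α} n_β V β α` whenever `c y = α`;
(ii) `Λ W = 𝒱 Λ`, so any solution of `d/dt p = W p` has lumped marginal obeying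
`d/dt (Λp) α = ∑_{β ≠ α} (n_α V α β (Λp) β − n_β V β α (Λp) α)`;
(iii) if `W π = 0` for a probability vector `π`, then `𝒱 (Λπ) = 0` and for strictly
positive `Λp` and `Λπ` the mesolevel entropy production rate is nonnegative. -/
theorem markovian_without_TSS {N M : ℕ} (c : Fin N → Fin M)
    (W R : Matrix (Fin N) (Fin N) ℝ) (V : Matrix (Fin M) (Fin M) ℝ)
    (hWoff : ∀ x y, x ≠ y → 0 ≤ W x y) (hWsum : ∀ y, ∑ x, W x y = 0)
    (hblock : ∀ x y, (c x = c y → W x y = R x y) ∧ (c x ≠ c y → W x y = V (c x) (c y))) :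
    -- (i) lumpability, and the block column sum identity
    ((∀ (α β : Fin M) (y y' : Fin N), c y = β → c y' = β →
        (∑ x, if c x = α then W x y else 0) = ∑ x, if c x = α then W x y' else 0) ∧
      ∀ (α : Fin M) (y : Fin N), c y = α →
        (∑ x, if c x = α then R x y else 0) =
          -∑ β ∈ univ.filter (fun β => β ≠ α), blockSize c β * V β α) ∧
    -- (ii) Λ W = 𝒱 Λ, and the lumped master equation for every solution
    (lumpMat c * W = lumpedRate c V * lumpMat c ∧
      ∀ p : ℝ → Fin N → ℝ,
        (∀ x t, HasDerivAt (fun s => p s x) ((W *ᵥ p t) x) t) →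
        ∀ (α : Fin M) (t : ℝ),
          HasDerivAt (fun s => lump c (p s) α)
            (∑ β ∈ univ.filter (fun β => β ≠ α),
              (blockSize c α * V α β * lump c (p t) β -
                blockSize c β * V β α * lump c (p t) α)) t) ∧
    -- (iii) fixed point and nonnegative entropy production rate
    ∀ π : Fin N → ℝ, (∀ x, 0 ≤ π x) → (∑ x, π x = 1) → W *ᵥ π = 0 →
      lumpedRate c V *ᵥ lump c π = 0 ∧
      ∀ p : Fin N → ℝ, (∀ x, 0 ≤ p x) → (∑ x, p x = 1) →
        (∀ α, 0 < lump c p α) → (∀ α, 0 < lump c π α) →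
        0 ≤ -∑ α, (lumpedRate c V *ᵥ lump c p) α *
          (Real.log (lump c p α) - Real.log (lump c π α)) := by
  have hV : ∀ x y, c x ≠ c y → W x y = V (c x) (c y) := fun x y => (hblock x y).2
  have hcol := lump_col_eq_lumpedRate hWsum hV
  have hmat := lumpMat_mul_eq_lumpedRate_mul hWsum hV
  have hlump := lump_mulVec_of_lumpMat_mul c hmat
  refine ⟨⟨?_, ?_⟩, ⟨hmat, ?_⟩, ?_⟩
  · intro α β y y' hy hy'
    change lump c (fun x => W x y) α = lump c (fun x => W x y') α
    rw [hcol, hcol, hy, hy']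
  · intro α y hy
    calc (∑ x, if c x = α then R x y else 0) = lump c (fun x => W x y) α :=
          Finset.sum_congr rfl fun x _ => by
            split_ifs with hx
            · exact ((hblock x y).1 (hx.trans hy.symm)).symm
            · rfl
      _ = lumpedRate c V α α := by rw [hcol, hy]
      _ = _ := if_pos rfl
  · intro p hp α t
    rw [← lumpedRate_mulVec_apply, ← hlump]
    exact hasDerivAt_lump c (fun x => hp x t) α
  · intro π _ _ hπ
    have hfix : lumpedRate c V *ᵥ lump c π = 0 := by
      rw [← hlump, hπ]
      funext α
      simp [lump]
    refine ⟨hfix, fun p _ _ hp hπpos => entropyProduction_nonneg _ ?_ (sum_lumpedRate_apply c V)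
      hp hπpos hfix⟩
    exact fun α β hαβ => lumpedRate_nonneg_of_ne hWoff hV hαβ
      (exists_of_lump_ne_zero c (hπpos β).ne')
end

section
/- Undriven second law at the mesolevel (combination of Theorems 2.2 and 2.4; case 1 of Theorems 3.2 and 4.1): Let (T_t)_{t ≥ 0} be column-stochastic N×N matrices with T_t π = π for all t, where π is a strictly positive probability vector, and let G_t α β = ∑_{x : c x = α} ∑_{y : c y = β} T_t x y · π y / (Λπ) β be the lumped propagator for conditionally equilibrated initial states. Assume Λπ is strictly positive, each G_t is invertible, and the lumped dynamics is 1-Markovian on an interval I ⊆ [0,∞): for all s ≤ t in I the matrix G_t · G_s⁻¹ has nonnegative entries. Then for every mesostate probability vector q and all s ≤ t in I with G_s q and G_t q strictly positive, D[G_t q ‖ Λπ] ≤ D[G_s q ‖ Λπ]; i.e. t ↦ D[Λp(t)‖Λπ] is antitone on I, so the entropy production rate Σ̇(t) = −(d/dt) D[Λp(t)‖Λπ] is nonnegative wherever it exists. -/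
open Matrix Finset

/-- Relative entropy `D[p‖q] = ∑_x p x · log (p x / q x)`, with the convention that
terms with `p x = 0` contribute `0`. -/
noncomputable def relEnt {K : ℕ} (p q : Fin K → ℝ) : ℝ :=
  ∑ x, if p x = 0 then 0 else p x * Real.log (p x / q x)

/-!
The lumped propagator factors as `G_t = Λ T_t D`, where `D` spreads a mesostate over its block
in proportion to `π`. Since `Λ`, `T_t` and `D` all have unit column sums and `D Λπ = π`,
`T_t π = π`, each `G_t` has unit column sums and fixes `Λπ`. So does the intermediate
propagator `G_t G_s⁻¹`, which by 1-Markovianity is also nonnegative, hence column stochastic.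
As `G_t q = (G_t G_s⁻¹)(G_s q)`, the claim is the data processing inequality for a stochastic
matrix fixing the reference vector, which follows row by row from the weighted log-sum
inequality, i.e. Jensen's inequality for `x ↦ x log x`.
-/

section Lumping

variable {N M : ℕ} (c : Fin N → Fin M)

def lumpMatrix : Matrix (Fin M) (Fin N) ℝ := fun α x => if c x = α then 1 else 0

noncomputable def condEquilibration (π : Fin N → ℝ) : Matrix (Fin N) (Fin M) ℝ :=
  fun y β => if c y = β then π y / lump c π β else 0

noncomputable def lumpedPropagator (T : Matrix (Fin N) (Fin N) ℝ) (π : Fin N → ℝ) :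
    Matrix (Fin M) (Fin M) ℝ :=
  lumpMatrix c * T * condEquilibration c π

theorem lumpMatrix_mulVec (p : Fin N → ℝ) : lumpMatrix c *ᵥ p = lump c p := by
  ext α
  simp [lumpMatrix, lump, mulVec, dotProduct]

theorem one_vecMul_lumpMatrix : 1 ᵥ* lumpMatrix c = 1 := by
  ext x
  simp [lumpMatrix, vecMul, dotProduct]

variable {c} {π : Fin N → ℝ}

theorem one_vecMul_condEquilibration (hπ : ∀ β, lump c π β ≠ 0) :
    1 ᵥ* condEquilibration c π = 1 := by
  ext β
  simp only [condEquilibration, vecMul, dotProduct, Pi.one_apply, one_mul]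
  rw [← div_self (hπ β), lump, Finset.sum_div]
  exact Finset.sum_congr rfl fun y _ => by split_ifs <;> simp

theorem condEquilibration_mulVec_lump (hπ : ∀ β, lump c π β ≠ 0) :
    condEquilibration c π *ᵥ lump c π = π := by
  ext y
  simp [condEquilibration, mulVec, dotProduct, div_mul_cancel₀ _ (hπ (c y))]

theorem lumpedPropagator_apply (T : Matrix (Fin N) (Fin N) ℝ) (α β : Fin M) :
    lumpedPropagator c T π α β
      = ∑ x, ∑ y, if c x = α ∧ c y = β then T x y * π y / lump c π β else 0 := by
  simp only [lumpedPropagator, mul_apply, lumpMatrix, condEquilibration, Finset.sum_mul]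
  rw [Finset.sum_comm]
  refine Finset.sum_congr rfl fun x _ => Finset.sum_congr rfl fun y _ => ?_
  split_ifs <;> simp_all [mul_div_assoc]

theorem one_vecMul_lumpedPropagator {T : Matrix (Fin N) (Fin N) ℝ} (hT : 1 ᵥ* T = 1)
    (hπ : ∀ β, lump c π β ≠ 0) : 1 ᵥ* lumpedPropagator c T π = 1 := by
  rw [lumpedPropagator, ← vecMul_vecMul, ← vecMul_vecMul, one_vecMul_lumpMatrix, hT,
    one_vecMul_condEquilibration hπ]

theorem lumpedPropagator_mulVec_lump {T : Matrix (Fin N) (Fin N) ℝ} (hT : T *ᵥ π = π)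
    (hπ : ∀ β, lump c π β ≠ 0) : lumpedPropagator c T π *ᵥ lump c π = lump c π := by
  rw [lumpedPropagator, ← mulVec_mulVec, ← mulVec_mulVec, condEquilibration_mulVec_lump hπ, hT,
    lumpMatrix_mulVec]

end Lumping

section IntermediatePropagator

variable {n R : Type*} [Fintype n] [DecidableEq n] [CommRing R] {A B : Matrix n n R}

theorem one_vecMul_mul_nonsing_inv (hA : IsUnit A) (hA1 : 1 ᵥ* A = 1) (hB1 : 1 ᵥ* B = 1) :
    1 ᵥ* (B * A⁻¹) = 1 :=
  calc 1 ᵥ* (B * A⁻¹) = (1 ᵥ* A) ᵥ* A⁻¹ := by rw [← vecMul_vecMul, hB1, hA1]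
    _ = 1 := by rw [vecMul_vecMul, mul_nonsing_inv A ((isUnit_iff_isUnit_det A).mp hA),
      vecMul_one]

theorem mul_nonsing_inv_mulVec_eq {w : n → R} (hA : IsUnit A) (hAw : A *ᵥ w = w)
    (hBw : B *ᵥ w = w) : (B * A⁻¹) *ᵥ w = w := by
  have hAinv : A⁻¹ *ᵥ w = w := by
    conv_lhs => rw [← hAw]
    rw [mulVec_mulVec, nonsing_inv_mul A ((isUnit_iff_isUnit_det A).mp hA), one_mulVec]
  rw [← mulVec_mulVec, hAinv, hBw]

end IntermediatePropagator

section RelativeEntropy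

open Real

variable {ι : Type*} [Fintype ι]

theorem weighted_log_sum_inequality {r p w : ι → ℝ} (hr : ∀ i, 0 ≤ r i) (hp : ∀ i, 0 ≤ p i)
    (hw : ∀ i, 0 < w i) (hW : 0 < ∑ i, r i * w i) :
    (∑ i, r i * p i) * log ((∑ i, r i * p i) / ∑ i, r i * w i)
      ≤ ∑ i, r i * (p i * log (p i / w i)) := by
  set W := ∑ i, r i * w i
  -- Jensen for `x ↦ x log x` at the points `p i / w i` with weights `r i * w i / W`
  have jensen := convexOn_mul_log.map_sum_le (t := Finset.univ) (w := fun i => r i * w i / W)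
    (p := fun i => p i / w i) (fun i _ => by have := hw i; have := hr i; positivity)
    (by rw [← Finset.sum_div, div_self hW.ne'])
    (fun i _ => Set.mem_Ici.2 (div_nonneg (hp i) (hw i).le))
  have hmean : ∑ i, (r i * w i / W) • (p i / w i) = (∑ i, r i * p i) / W := by
    rw [Finset.sum_div]
    refine Finset.sum_congr rfl fun i _ => ?_
    have := (hw i).ne'
    rw [smul_eq_mul]
    field_simp
  have hvalue : ∑ i, (r i * w i / W) • (p i / w i * log (p i / w i))
      = (∑ i, r i * (p i * log (p i / w i))) / W := by
    rw [Finset.sum_div]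
    refine Finset.sum_congr rfl fun i _ => ?_
    have := (hw i).ne'
    rw [smul_eq_mul]
    field_simp
  simp only [hmean, hvalue] at jensen
  calc (∑ i, r i * p i) * log ((∑ i, r i * p i) / W)
      = W * ((∑ i, r i * p i) / W * log ((∑ i, r i * p i) / W)) := by
        rw [← mul_assoc, mul_div_cancel₀ _ hW.ne']
    _ ≤ W * ((∑ i, r i * (p i * log (p i / w i))) / W) := by gcongr
    _ = ∑ i, r i * (p i * log (p i / w i)) := mul_div_cancel₀ _ hW.ne'

theorem relEnt_eq_sum {K : ℕ} (p q : Fin K → ℝ) :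
    relEnt p q = ∑ x, p x * log (p x / q x) :=
  Finset.sum_congr rfl fun x _ => by split_ifs with h <;> simp [h]

theorem relEnt_mulVec_le {K : ℕ} {R : Matrix (Fin K) (Fin K) ℝ}
    (hR : R ∈ colStochastic ℝ (Fin K)) {w : Fin K → ℝ} (hw : ∀ α, 0 < w α)
    (hRw : R *ᵥ w = w) {p : Fin K → ℝ} (hp : ∀ α, 0 ≤ p α) :
    relEnt (R *ᵥ p) w ≤ relEnt p w := by
  have hrow : ∀ α, (R *ᵥ p) α * log ((R *ᵥ p) α / w α)
      ≤ ∑ β, R α β * (p β * log (p β / w β)) := fun α => by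
    have hRwα : ∑ β, R α β * w β = w α := congrFun hRw α
    have := weighted_log_sum_inequality (fun β => nonneg_of_mem_colStochastic hR) hp hw
      (hRwα ▸ hw α)
    rwa [hRwα] at this
  calc relEnt (R *ᵥ p) w ≤ ∑ α, ∑ β, R α β * (p β * log (p β / w β)) := by
        rw [relEnt_eq_sum]; exact Finset.sum_le_sum fun α _ => hrow α
    _ = ∑ β, (∑ α, R α β) * (p β * log (p β / w β)) := by
        rw [Finset.sum_comm]; simp only [Finset.sum_mul]
    _ = relEnt p w := by
        simp only [sum_col_of_mem_colStochastic hR, one_mul, relEnt_eq_sum]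

end RelativeEntropy

theorem undriven_second_law_mesolevel_general {N M : ℕ} (c : Fin N → Fin M)
    (T : ℝ → Matrix (Fin N) (Fin N) ℝ)
    (π : Fin N → ℝ)
    (hTsum : ∀ t, 0 ≤ t → ∀ y, ∑ x, T t x y = 1)
    (hTfix : ∀ t, 0 ≤ t → T t *ᵥ π = π)
    (G : ℝ → Matrix (Fin M) (Fin M) ℝ)
    (hG : ∀ t α β,
      G t α β = ∑ x, ∑ y, if c x = α ∧ c y = β then T t x y * π y / lump c π β else 0)
    (hΛπpos : ∀ α, 0 < lump c π α)
    (hGinv : ∀ t, 0 ≤ t → IsUnit (G t))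
    (I : Set ℝ) (hI : I ⊆ Set.Ici (0:ℝ))
    (hMarkov : ∀ s ∈ I, ∀ t ∈ I, s ≤ t → ∀ α β, 0 ≤ (G t * (G s)⁻¹) α β) :
    ∀ q : Fin M → ℝ, (∀ α, 0 ≤ q α) → (∑ α, q α = 1) →
      ∀ s ∈ I, ∀ t ∈ I, s ≤ t →
        (∀ α, 0 < (G s *ᵥ q) α) → (∀ α, 0 < (G t *ᵥ q) α) →
        relEnt (G t *ᵥ q) (lump c π) ≤ relEnt (G s *ᵥ q) (lump c π) := by
  intro q _ _ s hs t ht hst hGsq _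
  have hΛπ : ∀ α, lump c π α ≠ 0 := fun α => (hΛπpos α).ne'
  have hGu : ∀ u, G u = lumpedPropagator c (T u) π := fun u =>
    Matrix.ext fun α β => (hG u α β).trans (lumpedPropagator_apply _ α β).symm
  have hG1 : ∀ u ∈ I, 1 ᵥ* G u = 1 := fun u hu => by
    rw [hGu]
    exact one_vecMul_lumpedPropagator
      (funext fun y => by simpa [vecMul, dotProduct] using hTsum u (hI hu) y) hΛπ
  have hGfix : ∀ u ∈ I, G u *ᵥ lump c π = lump c π := fun u hu => by
    rw [hGu]
    exact lumpedPropagator_mulVec_lump (hTfix u (hI hu)) hΛπ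
  have hGs : IsUnit (G s) := hGinv s (hI hs)
  have hstoch : G t * (G s)⁻¹ ∈ colStochastic ℝ (Fin M) :=
    ⟨hMarkov s hs t ht hst, one_vecMul_mul_nonsing_inv hGs (hG1 s hs) (hG1 t ht)⟩
  have hfactor : G t *ᵥ q = (G t * (G s)⁻¹) *ᵥ (G s *ᵥ q) := by
    rw [mulVec_mulVec, nonsing_inv_mul_cancel_right _ _ ((isUnit_iff_isUnit_det _).mp hGs)]
  rw [hfactor]
  exact relEnt_mulVec_le hstoch hΛπpos (mul_nonsing_inv_mulVec_eq hGs (hGfix s hs) (hGfix t ht))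
    fun α => (hGsq α).le

/-- **Undriven second law at the mesolevel** (combination of Theorems 2.2 and 2.4; case 1
of Theorems 3.2 and 4.1). For an undriven microscopic process `T_t` with strictly positive
steady state `π`, let `G_t` be the lumped propagator for conditionally equilibrated initial
states. If each `G_t` is invertible and the lumped dynamics is 1-Markovian on `I`
(the intermediate-time transition matrices `G_t G_s⁻¹` have nonnegative entries), then
`t ↦ D[G_t q ‖ Λπ]` is antitone on `I` for every mesostate probability vector `q`, so the
entropy production rate `Σ̇(t) = −(d/dt) D[Λp(t)‖Λπ]` is nonnegative wherever it exists. -/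
theorem undriven_second_law_mesolevel {N M : ℕ} (c : Fin N → Fin M)
    (T : ℝ → Matrix (Fin N) (Fin N) ℝ)
    (π : Fin N → ℝ) (hπpos : ∀ x, 0 < π x) (hπsum : ∑ x, π x = 1)
    (hTnonneg : ∀ t, 0 ≤ t → ∀ x y, 0 ≤ T t x y)
    (hTsum : ∀ t, 0 ≤ t → ∀ y, ∑ x, T t x y = 1)
    (hTfix : ∀ t, 0 ≤ t → T t *ᵥ π = π)
    (G : ℝ → Matrix (Fin M) (Fin M) ℝ)
    (hG : ∀ t α β,
      G t α β = ∑ x, ∑ y, if c x = α ∧ c y = β then T t x y * π y / lump c π β else 0)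
    (hΛπpos : ∀ α, 0 < lump c π α)
    (hGinv : ∀ t, 0 ≤ t → IsUnit (G t))
    (I : Set ℝ) (hI : I ⊆ Set.Ici (0:ℝ))
    (hMarkov : ∀ s ∈ I, ∀ t ∈ I, s ≤ t → ∀ α β, 0 ≤ (G t * (G s)⁻¹) α β) :
    ∀ q : Fin M → ℝ, (∀ α, 0 ≤ q α) → (∑ α, q α = 1) →
      ∀ s ∈ I, ∀ t ∈ I, s ≤ t →
        (∀ α, 0 < (G s *ᵥ q) α) → (∀ α, 0 < (G t *ᵥ q) α) →
        relEnt (G t *ᵥ q) (lump c π) ≤ relEnt (G s *ᵥ q) (lump c π) :=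
  undriven_second_law_mesolevel_general c T π hTsum hTfix G hG hΛπpos hGinv I hI hMarkov
end

section
/- Theorem B.1 (weak lumpability and the steady state, after Kemeny–Snell): Let T be a column-stochastic N×N matrix that is regular (some power Tⁿ has all entries strictly positive) with steady state π (T π = π, π a probability vector; regularity makes π strictly positive). Say the lumped process with initial distribution p is a homogeneous Markov chain with transition matrix 𝒢 if for all n ≥ 1 and all mesostates α₀, …, αₙ: ∑_{x₀,…,xₙ : c x_k = α_k for all k} T xₙ x_{n−1} ⋯ T x₁ x₀ · p x₀ = 𝒢 αₙ α_{n−1} ⋯ 𝒢 α₁ α₀ · (Λp) α₀. If there exists a probability vector p and a column-stochastic matrix 𝒢 such that the lumped process with initial distribution p is a homogeneous Markov chain with transition matrix 𝒢, then the lumped process with initial distribution π is a homogeneous Markov chain whose transition matrix is given by G α β = ∑_{x : c x = α} ∑_{y : c y = β} T x y · π y / (Λπ) β. -/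
/-!
If the lumped chain started from `p` is Markov with matrix `𝒢`, so is the one started from
`T p`: a path from `T p` is a path from `p` whose initial mesostate is summed out. Regularity
makes a power of `T` a strict `ℓ¹` contraction on zero-sum vectors (Doeblin), so `Tᵐ p → π`,
and since the Markov property is a closed condition it holds at `π` with the same `𝒢`. As `π`
is strictly positive, the one-step joint law from `π` then pins down `𝒢` on every occupied
mesostate, where it is the stated matrix.
-/

open Matrix Finset

/-- Joint probability that the lumped process visits the mesostates
`α 0, α 1, …, α n` at times `0, τ, …, nτ`, for microscopic transition matrix `T`
and initial microstate distribution `p`. -/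
noncomputable def pathProb {N M : ℕ} (T : Matrix (Fin N) (Fin N) ℝ) (c : Fin N → Fin M)
    (p : Fin N → ℝ) (n : ℕ) (α : Fin (n + 1) → Fin M) : ℝ :=
  ∑ x : Fin (n + 1) → Fin N,
    if ∀ k, c (x k) = α k then (∏ k : Fin n, T (x k.succ) (x k.castSucc)) * p (x 0) else 0

/-- The lumped process with initial distribution `p` is a homogeneous Markov chain with
transition matrix `𝒢`: all its joint distributions factorize through `𝒢`. -/
def IsLumpedMarkov {N M : ℕ} (T : Matrix (Fin N) (Fin N) ℝ) (c : Fin N → Fin M)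
    (p : Fin N → ℝ) (G : Matrix (Fin M) (Fin M) ℝ) : Prop :=
  ∀ n : ℕ, 1 ≤ n → ∀ α : Fin (n + 1) → Fin M,
    pathProb T c p n α = (∏ k : Fin n, G (α k.succ) (α k.castSucc)) * lump c p (α 0)

open Filter Topology

section ColStochastic

variable {ι : Type*} [Fintype ι] [DecidableEq ι] {A : Matrix ι ι ℝ}

theorem pow_mulVec_eq_self {v : ι → ℝ} (h : A *ᵥ v = v) (m : ℕ) : A ^ m *ᵥ v = v := by
  induction m with
  | zero => simp
  | succ m ih => rw [pow_succ, ← mulVec_mulVec, h, ih]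

theorem pos_of_mulVec_eq_self {n : ℕ} (hA : ∀ i j, 0 < (A ^ n) i j) {v : ι → ℝ}
    (hfix : A *ᵥ v = v) (hv : ∀ i, 0 ≤ v i) (hv0 : v ≠ 0) (i : ι) : 0 < v i := by
  obtain ⟨j, hj⟩ := Function.ne_iff.1 hv0
  rw [← pow_mulVec_eq_self hfix n, mulVec, dotProduct]
  exact sum_pos' (fun k _ => mul_nonneg (hA i k).le (hv k))
    ⟨j, mem_univ j, mul_pos (hA i j) ((hv j).lt_of_ne' hj)⟩

theorem pow_succ_apply_pos (hA : A ∈ colStochastic ℝ ι) {n : ℕ} (hn : ∀ i j, 0 < (A ^ n) i j)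
    (i j : ι) : 0 < (A ^ (n + 1)) i j := by
  obtain ⟨k, -, hk⟩ : ∃ k ∈ univ, (0 : ι → ℝ) k < A k j :=
    exists_lt_of_sum_lt (by simp [sum_col_of_mem_colStochastic hA j])
  rw [pow_succ, mul_apply]
  exact sum_pos' (fun l _ => mul_nonneg (hn i l).le (hA.1 l j)) ⟨k, mem_univ k, mul_pos (hn i k) hk⟩

theorem card_mul_le_one_of_le_apply [Nonempty ι] (hA : A ∈ colStochastic ℝ ι) {δ : ℝ}
    (hδ : ∀ i j, δ ≤ A i j) : Fintype.card ι * δ ≤ 1 := by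
  obtain ⟨j⟩ := ‹Nonempty ι›
  calc Fintype.card ι * δ = ∑ i, δ := by simp
    _ ≤ ∑ i, A i j := sum_le_sum fun i _ => hδ i j
    _ = 1 := sum_col_of_mem_colStochastic hA j

theorem sum_abs_mulVec_le_of_le_apply (hA : A ∈ colStochastic ℝ ι) {δ : ℝ}
    (hδ : ∀ i j, δ ≤ A i j) {v : ι → ℝ} (hv : ∑ j, v j = 0) :
    ∑ i, |(A *ᵥ v) i| ≤ (1 - Fintype.card ι * δ) * ∑ j, |v j| := by
  have hshift : ∀ i, (A *ᵥ v) i = ∑ j, (A i j - δ) * v j := by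
    intro i
    simp [mulVec, dotProduct, sub_mul, sum_sub_distrib, ← mul_sum, hv]
  calc ∑ i, |(A *ᵥ v) i| ≤ ∑ i, ∑ j, (A i j - δ) * |v j| := by
        refine sum_le_sum fun i _ => ?_
        rw [hshift]
        refine (abs_sum_le_sum_abs _ _).trans_eq (sum_congr rfl fun j _ => ?_)
        rw [abs_mul, abs_of_nonneg (sub_nonneg.2 (hδ i j))]
    _ = (1 - Fintype.card ι * δ) * ∑ j, |v j| := by
        rw [sum_comm, mul_sum]
        simp [← sum_mul, sum_sub_distrib, sum_col_of_mem_colStochastic hA]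

theorem sum_abs_pow_mulVec_le [Nonempty ι] (hA : A ∈ colStochastic ℝ ι) {n : ℕ} {δ : ℝ}
    (hδ : ∀ i j, δ ≤ (A ^ n) i j) {v : ι → ℝ} (hv : ∑ j, v j = 0) (m : ℕ) :
    ∑ i, |(A ^ m *ᵥ v) i| ≤ (1 - Fintype.card ι * δ) ^ (m / n) * ∑ j, |v j| := by
  set ρ := 1 - Fintype.card ι * δ
  have hρ : 0 ≤ ρ := sub_nonneg.2 (card_mul_le_one_of_le_apply (pow_mem hA n) hδ)
  have key : ∀ q r, ∑ i, |(A ^ (n * q + r) *ᵥ v) i| ≤ ρ ^ q * ∑ j, |v j| := by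
    intro q r
    induction q with
    | zero =>
      simpa [ρ] using sum_abs_mulVec_le_of_le_apply (pow_mem hA r) (δ := 0) (pow_mem hA r).1 hv
    | succ q ih =>
      have hsum : ∑ j, (A ^ (n * q + r) *ᵥ v) j = 0 := by
        rw [sum_mulVec_of_mem_colStochastic (pow_mem hA _), hv]
      rw [show n * (q + 1) + r = n + (n * q + r) by ring, pow_add, ← mulVec_mulVec, pow_succ']
      calc _ ≤ ρ * ∑ i, |(A ^ (n * q + r) *ᵥ v) i| :=
            sum_abs_mulVec_le_of_le_apply (pow_mem hA n) hδ hsum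
        _ ≤ _ := by rw [mul_assoc]; gcongr
  simpa [Nat.div_add_mod] using key (m / n) (m % n)

theorem tendsto_pow_mulVec_of_sum_eq_zero [Nonempty ι] (hA : A ∈ colStochastic ℝ ι)
    (hreg : ∃ n, ∀ i j, 0 < (A ^ n) i j) {v : ι → ℝ} (hv : ∑ j, v j = 0) :
    Tendsto (fun m => A ^ m *ᵥ v) atTop (𝓝 0) := by
  obtain ⟨n, hn⟩ := hreg
  obtain ⟨⟨i₀, j₀⟩, hmin⟩ := Finite.exists_min fun ij : ι × ι => (A ^ (n + 1)) ij.1 ij.2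
  set δ := (A ^ (n + 1)) i₀ j₀
  have hδ : ∀ i j, δ ≤ (A ^ (n + 1)) i j := fun i j => hmin (i, j)
  have hρ0 : 0 ≤ 1 - Fintype.card ι * δ :=
    sub_nonneg.2 (card_mul_le_one_of_le_apply (pow_mem hA _) hδ)
  have hρ1 : 1 - Fintype.card ι * δ < 1 := by
    have := pow_succ_apply_pos hA hn i₀ j₀
    have : (0 : ℝ) < Fintype.card ι := Nat.cast_pos.2 Fintype.card_pos
    nlinarith
  have hbound : ∀ m, ‖A ^ m *ᵥ v‖ ≤ (1 - Fintype.card ι * δ) ^ (m / (n + 1)) * ∑ j, |v j| :=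
    fun m => ((pi_norm_le_iff_of_nonneg (sum_nonneg fun i _ => abs_nonneg _)).2 fun i =>
      single_le_sum (f := fun i => |(A ^ m *ᵥ v) i|) (fun i _ => abs_nonneg _) (mem_univ i)).trans
      (sum_abs_pow_mulVec_le hA hδ hv m)
  refine squeeze_zero_norm hbound ?_
  simpa using ((tendsto_pow_atTop_nhds_zero_of_lt_one hρ0 hρ1).comp
    (Nat.tendsto_div_const_atTop n.succ_ne_zero)).mul_const (∑ j, |v j|)

theorem tendsto_pow_mulVec_of_regular (hA : A ∈ colStochastic ℝ ι)
    (hreg : ∃ n, ∀ i j, 0 < (A ^ n) i j) {π p : ι → ℝ} (hπ : ∑ i, π i = 1)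
    (hfix : A *ᵥ π = π) (hp : ∑ i, p i = 1) :
    Tendsto (fun m => A ^ m *ᵥ p) atTop (𝓝 π) := by
  have : Nonempty ι := by
    by_contra h
    simp [not_nonempty_iff.1 h] at hπ
  have hv : ∑ i, (p - π) i = 0 := by simp [sum_sub_distrib, hp, hπ]
  convert (tendsto_pow_mulVec_of_sum_eq_zero hA hreg hv).const_add π using 1
  · ext m : 1
    rw [mulVec_sub, pow_mulVec_eq_self hfix, add_sub_cancel]
  · simp

end ColStochastic

section Lumping

variable {N M : ℕ} {T : Matrix (Fin N) (Fin N) ℝ} {c : Fin N → Fin M}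

theorem lump_eq_zero_of_notMem_range (q : Fin N → ℝ) {β : Fin M} (hβ : β ∉ Set.range c) :
    lump c q β = 0 :=
  sum_eq_zero fun x _ => if_neg fun hx => hβ ⟨x, hx⟩

theorem lump_pos {q : Fin N → ℝ} (hq : ∀ x, 0 < q x) (x : Fin N) : 0 < lump c q (c x) :=
  sum_pos' (fun y _ => by split_ifs <;> simp [(hq y).le]) ⟨x, mem_univ x, by simp [hq x]⟩

theorem continuous_lump (β : Fin M) : Continuous fun q : Fin N → ℝ => lump c q β := by
  unfold lump
  exact continuous_finsetSum _ fun x _ => by split_ifs <;> fun_prop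

theorem pathProb_zero (q : Fin N → ℝ) (α : Fin 1 → Fin M) :
    pathProb T c q 0 α = lump c q (α 0) := by
  rw [pathProb, ← (Fin.consEquiv fun _ => Fin N).sum_comp, Fintype.sum_prod_type]
  simp [Fin.forall_fin_one, lump]

theorem pathProb_cons (q : Fin N → ℝ) (n : ℕ) (β : Fin M) (α : Fin (n + 1) → Fin M) :
    pathProb T c q (n + 1) (Fin.cons β α) =
      pathProb T c (T *ᵥ (c ⁻¹' {β}).indicator q) n α := by
  rw [pathProb, ← (Fin.consEquiv fun _ => Fin N).sum_comp, Fintype.sum_prod_type,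
    sum_comm, pathProb]
  refine sum_congr rfl fun x _ => ?_
  by_cases hx : ∀ k, c (x k) = α k
  · simp [hx, Fin.forall_fin_succ (n := n + 1), Fin.prod_univ_succ, Fin.consEquiv, mulVec,
      dotProduct, Set.indicator, mul_sum, mul_assoc, mul_left_comm, mul_ite]
  · simp [hx, Fin.forall_fin_succ (n := n + 1), Fin.consEquiv]

theorem pathProb_mulVec (q : Fin N → ℝ) (n : ℕ) (α : Fin (n + 1) → Fin M) :
    pathProb T c (T *ᵥ q) n α = ∑ β, pathProb T c q (n + 1) (Fin.cons β α) := by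
  simp_rw [pathProb_cons, pathProb]
  rw [sum_comm]
  refine sum_congr rfl fun x _ => ?_
  split_ifs
  · simp [← mul_sum, mulVec, dotProduct, Set.indicator, mul_ite, sum_comm (γ := Fin M)]
  · simp

theorem pathProb_one (q : Fin N → ℝ) (α β : Fin M) :
    pathProb T c q 1 ![β, α] = ∑ x, ∑ y, if c x = α ∧ c y = β then T x y * q y else 0 := by
  rw [show ![β, α] = Fin.cons β ![α] from rfl, pathProb_cons, pathProb_zero]
  simp [lump, mulVec, dotProduct, Set.indicator, ite_and, sum_ite_irrel]

theorem pathProb_eq_zero_of_notMem_range (q : Fin N → ℝ) {n : ℕ} {α : Fin (n + 1) → Fin M}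
    {k : Fin (n + 1)} (hk : α k ∉ Set.range c) : pathProb T c q n α = 0 :=
  sum_eq_zero fun x _ => if_neg fun hx => hk ⟨x k, hx k⟩

theorem continuous_pathProb (n : ℕ) (α : Fin (n + 1) → Fin M) :
    Continuous fun q : Fin N → ℝ => pathProb T c q n α := by
  unfold pathProb
  exact continuous_finsetSum _ fun x _ => by split_ifs <;> fun_prop

theorem isClosed_setOf_isLumpedMarkov (G : Matrix (Fin M) (Fin M) ℝ) :
    IsClosed {q | IsLumpedMarkov T c q G} := by
  simp only [IsLumpedMarkov, Set.ofPred_forall]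
  exact isClosed_iInter fun n => isClosed_iInter fun _ => isClosed_iInter fun α =>
    isClosed_eq (continuous_pathProb n α) (continuous_const.mul (continuous_lump _))

namespace IsLumpedMarkov

variable {p : Fin N → ℝ} {G : Matrix (Fin M) (Fin M) ℝ}

theorem pathProb_one_eq (hG : IsLumpedMarkov T c p G) (α β : Fin M) :
    pathProb T c p 1 ![β, α] = G α β * lump c p β := by
  simpa using hG 1 le_rfl ![β, α]

theorem lump_mulVec (hG : IsLumpedMarkov T c p G) : lump c (T *ᵥ p) = G *ᵥ lump c p := by
  ext γ
  rw [show lump c (T *ᵥ p) γ = pathProb T c (T *ᵥ p) 0 ![γ] from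
      (pathProb_zero (T := T) (c := c) _ ![γ]).symm,
    pathProb_mulVec]
  simp_rw [Matrix.mulVec, dotProduct, ← hG.pathProb_one_eq]
  rfl

theorem mulVec (hG : IsLumpedMarkov T c p G) : IsLumpedMarkov T c (T *ᵥ p) G := by
  intro n _ α
  simp_rw [pathProb_mulVec, hG (n + 1) n.succ_pos, Fin.prod_univ_succ, Fin.cons_succ,
    Fin.castSucc_zero, Fin.cons_zero, ← Fin.succ_castSucc, Fin.cons_succ, hG.lump_mulVec,
    Matrix.mulVec, dotProduct, mul_sum]
  exact sum_congr rfl fun β _ => by ring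

theorem pow_mulVec (hG : IsLumpedMarkov T c p G) (m : ℕ) :
    IsLumpedMarkov T c (T ^ m *ᵥ p) G := by
  induction m with
  | zero => simpa
  | succ m ih => simpa [pow_succ', ← mulVec_mulVec] using ih.mulVec

theorem of_tendsto {ι : Type*} {l : Filter ι} [l.NeBot] {q : ι → Fin N → ℝ}
    (hq : ∀ i, IsLumpedMarkov T c (q i) G) (h : Tendsto q l (𝓝 p)) : IsLumpedMarkov T c p G :=
  (isClosed_setOf_isLumpedMarkov G).mem_of_tendsto h (Eventually.of_forall hq)

theorem congr (hG : IsLumpedMarkov T c p G) {G' : Matrix (Fin M) (Fin M) ℝ}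
    (hG' : ∀ x y, G' (c x) (c y) = G (c x) (c y))
    (hG'0 : ∀ α β, α ∉ Set.range c → G' α β = 0) : IsLumpedMarkov T c p G' := by
  intro n hn α
  by_cases hα : ∀ k, α k ∈ Set.range c
  · choose x hx using hα
    rw [hG n hn α]
    congr 1
    refine prod_congr rfl fun k _ => ?_
    rw [← hx, ← hx, hG']
  · obtain ⟨k, hk⟩ := not_forall.1 hα
    rw [pathProb_eq_zero_of_notMem_range p hk]
    rcases Fin.eq_zero_or_eq_succ k with rfl | ⟨j, rfl⟩
    · rw [lump_eq_zero_of_notMem_range p hk, mul_zero]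
    · rw [prod_eq_zero (mem_univ j) (hG'0 _ _ hk), zero_mul]

end IsLumpedMarkov

end Lumping

section SteadyState

variable {N M : ℕ} (T : Matrix (Fin N) (Fin N) ℝ) (c : Fin N → Fin M) (π : Fin N → ℝ)

noncomputable def lumpedTransition : Matrix (Fin M) (Fin M) ℝ :=
  Matrix.of fun α β => ∑ x, ∑ y, if c x = α ∧ c y = β then T x y * π y / lump c π β else 0

theorem lumpedTransition_apply (α β : Fin M) :
    lumpedTransition T c π α β = pathProb T c π 1 ![β, α] / lump c π β := by
  simp [lumpedTransition, pathProb_one, sum_div, ite_div]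

theorem lumpedTransition_apply_eq_zero {α : Fin M} (hα : α ∉ Set.range c) (β : Fin M) :
    lumpedTransition T c π α β = 0 := by
  rw [lumpedTransition_apply, pathProb_eq_zero_of_notMem_range π (k := 1) hα, zero_div]

variable {T c π}

theorem IsLumpedMarkov.lumpedTransition_apply_eq {G : Matrix (Fin M) (Fin M) ℝ}
    (hG : IsLumpedMarkov T c π G) (α : Fin M) {β : Fin M} (hβ : lump c π β ≠ 0) :
    lumpedTransition T c π α β = G α β := by
  rw [lumpedTransition_apply, hG.pathProb_one_eq, mul_div_cancel_right₀ _ hβ]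

end SteadyState

/-- **Theorem B.1 (weak lumpability and the steady state, after Kemeny–Snell).**
Let `T` be a regular column-stochastic matrix with steady state `π`. If the lumped process
is a homogeneous Markov chain for *some* initial probability vector `p` and some
column-stochastic transition matrix `𝒢`, then the lumped process started from `π` is a
homogeneous Markov chain with transition matrix
`G α β = ∑_{x : c x = α} ∑_{y : c y = β} T x y · π y / (Λπ) β`. -/
theorem weak_lumpability_steady_state {N M : ℕ} (c : Fin N → Fin M)
    (T : Matrix (Fin N) (Fin N) ℝ)
    (hTnonneg : ∀ x y, 0 ≤ T x y) (hTsum : ∀ y, ∑ x, T x y = 1)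
    (hreg : ∃ n : ℕ, ∀ x y, 0 < (T ^ n) x y)
    (π : Fin N → ℝ) (hπ : ∀ x, 0 ≤ π x) (hπsum : ∑ x, π x = 1)
    (hfix : T *ᵥ π = π)
    (h : ∃ (p : Fin N → ℝ) (G : Matrix (Fin M) (Fin M) ℝ),
      (∀ x, 0 ≤ p x) ∧ (∑ x, p x = 1) ∧
      (∀ α β, 0 ≤ G α β) ∧ (∀ β, ∑ α, G α β = 1) ∧
      IsLumpedMarkov T c p G) :
    IsLumpedMarkov T c π
      (Matrix.of fun α β =>
        ∑ x, ∑ y, if c x = α ∧ c y = β then T x y * π y / lump c π β else 0) := by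
  obtain ⟨p, G, -, hp, -, -, hpG⟩ := h
  have hT : T ∈ colStochastic ℝ (Fin N) := mem_colStochastic_iff_sum.2 ⟨hTnonneg, hTsum⟩
  have hπG : IsLumpedMarkov T c π G :=
    IsLumpedMarkov.of_tendsto hpG.pow_mulVec (tendsto_pow_mulVec_of_regular hT hreg hπsum hfix hp)
  obtain ⟨n, hn⟩ := hreg
  have hπpos : ∀ x, 0 < π x :=
    pos_of_mulVec_eq_self hn hfix hπ fun h0 => by simp [h0] at hπsum
  exact hπG.congr (fun x y => hπG.lumpedTransition_apply_eq _ (lump_pos hπpos y).ne')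
    fun α β hα => lumpedTransition_apply_eq_zero T c π hα β
end
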